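/- Dichotomy below the excited energy, singularity part: let α > 2 and ω > 0, and let x(t) be a solution of the N-body problem with center of mass zero and energy E(x(0), ẋ(0)) < E*(ω). If there exists t* ≥ 0 such that K_ω(x(t)) < 0 for all t > t* in the maximal interval of existence, then the solution has a singularity in finite time (σ < ∞); indeed, writing E = E*(ω) − δ with δ > 0, one has Ï(x(t)) < −4δ for all t > t*. -/

import Mathlib

/- STATEMENT 4: dichotomy below the excited energy, singularity part. -/

namespace NBodyPaper

open Real Filter

noncomputable section

abbrev E3 := EuclideanSpace ℝ (Fin 3)

variable {N : ℕ}

/-- The α-homogeneous potential `U(x) = -∑_{i<j} m_i m_j / |x_i - x_j|^α`. -/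
def pot (α : ℝ) (m : Fin N → ℝ) (q : Fin N → E3) : ℝ :=
  -∑ i : Fin N, ∑ j ∈ Finset.univ.filter (fun j => i < j), m i * m j / ‖q i - q j‖ ^ α

def kinetic (m : Fin N → ℝ) (v : Fin N → E3) : ℝ := (1 / 2) * ∑ i, m i * ‖v i‖ ^ 2

/-- Total energy `E(x, ẋ)`. -/
def energy (α : ℝ) (m : Fin N → ℝ) (q v : Fin N → E3) : ℝ := kinetic m v + pot α m q

/-- Moment of inertia `I(x) = ∑ m_i |x_i|²`. -/
def inertia (m : Fin N → ℝ) (q : Fin N → E3) : ℝ := ∑ i, m i * ‖q i‖ ^ 2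

/-- `ẍ_i = -∇_i U / m_i = -α ∑_{j≠i} m_j (x_i - x_j)/|x_i - x_j|^{α+2}`. -/
def accel (α : ℝ) (m : Fin N → ℝ) (q : Fin N → E3) (i : Fin N) : E3 :=
  (-α) • ∑ j ∈ Finset.univ.erase i, (m j / ‖q i - q j‖ ^ (α + 2)) • (q i - q j)

/-- Collision-free configuration. -/
def OffDiag (q : Fin N → E3) : Prop := ∀ i j, i ≠ j → q i ≠ q j

/-- The time interval `[0, σ)` for `σ ∈ (0, ∞]`. -/
def Dom (σ : EReal) : Set ℝ := {t : ℝ | 0 ≤ t ∧ (t : EReal) < σ}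

/-- `x` (with velocity `v`) solves the N-body equations on the set `s`. -/
def IsSolnOn (α : ℝ) (m : Fin N → ℝ) (x v : ℝ → Fin N → E3) (s : Set ℝ) : Prop :=
  ∀ t ∈ s, OffDiag (x t) ∧
    ∀ i, HasDerivAt (fun τ => x τ i) (v t i) t ∧ HasDerivAt (fun τ => v τ i) (accel α m (x t) i) t

/-- `x` is a solution on its maximal interval of existence `[0, σ)`:
it solves the equations there and no solution extends it to a longer interval. -/
def IsMaxSoln (α : ℝ) (m : Fin N → ℝ) (σ : EReal) (x v : ℝ → Fin N → E3) : Prop :=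
  0 < σ ∧ IsSolnOn α m x v (Dom σ) ∧
    ∀ (σ' : EReal) (x' v' : ℝ → Fin N → E3), IsSolnOn α m x' v' (Dom σ') →
      (∀ t ∈ Dom σ, x' t = x t ∧ v' t = v t) → σ' ≤ σ

/-- Center of mass at the origin. -/
def comZero (m : Fin N → ℝ) (q : Fin N → E3) : Prop := ∑ i, m i • q i = 0

/-- The threshold function `K_ω(x) = ω² I(x) + α U(x)`. -/
def Kfun (α : ℝ) (m : Fin N → ℝ) (ω : ℝ) (q : Fin N → E3) : ℝ :=
  ω ^ 2 * inertia m q + α * pot α m q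

/-- `E_ω(x) = (ω²/2) I(x) + U(x)`. -/
def Eomega (α : ℝ) (m : Fin N → ℝ) (ω : ℝ) (q : Fin N → E3) : ℝ :=
  ω ^ 2 / 2 * inertia m q + pot α m q

/-- The excited energy `E*(ω) = inf { E_ω(x) : K_ω(x) = 0 }`, the infimum taken over
collision-free configurations with center of mass zero. -/
def Estar (α : ℝ) (m : Fin N → ℝ) (ω : ℝ) : ℝ :=
  sInf {e : ℝ | ∃ q : Fin N → E3, OffDiag q ∧ comZero m q ∧ Kfun α m ω q = 0 ∧ e = Eomega α m ω q}
open scoped RealInnerProductSpace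


/-- Symmetrization of a double sum over distinct indices into ordered pairs. -/
lemma sum_erase_pairs {N : ℕ} (f : Fin N → Fin N → ℝ) :
    ∑ i, ∑ j ∈ Finset.univ.erase i, f i j
      = ∑ i, ∑ j ∈ Finset.univ.filter (fun j => i < j), (f i j + f j i) := by
  have h1 : ∀ i : Fin N, Finset.univ.erase i
      = (Finset.univ.filter (fun j => i < j)) ∪ (Finset.univ.filter (fun j => j < i)) := by
    intro i; ext j
    simp only [Finset.mem_erase, Finset.mem_union, Finset.mem_filter, Finset.mem_univ,
      true_and, and_true]
    constructor
    · intro h; exact (Ne.lt_or_gt h).symm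
    · rintro (h | h)
      · exact ne_of_gt h
      · exact ne_of_lt h
  have hdisj : ∀ i : Fin N,
      Disjoint (Finset.univ.filter (fun j => i < j)) (Finset.univ.filter (fun j => j < i)) := by
    intro i
    refine Finset.disjoint_left.2 fun j hj hj' => ?_
    simp only [Finset.mem_filter] at hj hj'
    exact absurd hj'.2 (not_lt.2 hj.2.le)
  have hswap : ∑ i, ∑ j ∈ Finset.univ.filter (fun j => j < i), f i j
      = ∑ i, ∑ j ∈ Finset.univ.filter (fun j => i < j), f j i := by
    refine Finset.sum_comm' ?_
    intro i j
    simp only [Finset.mem_filter, Finset.mem_univ, true_and, and_true]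
  calc ∑ i, ∑ j ∈ Finset.univ.erase i, f i j
      = ∑ i, (∑ j ∈ Finset.univ.filter (fun j => i < j), f i j
            + ∑ j ∈ Finset.univ.filter (fun j => j < i), f i j) := by
        refine Finset.sum_congr rfl fun i _ => ?_
        rw [h1 i, Finset.sum_union (hdisj i)]
    _ = ∑ i, ∑ j ∈ Finset.univ.filter (fun j => i < j), f i j
        + ∑ i, ∑ j ∈ Finset.univ.filter (fun j => i < j), f j i := by
        rw [Finset.sum_add_distrib, hswap]
    _ = _ := by rw [← Finset.sum_add_distrib]
                exact Finset.sum_congr rfl fun i _ => (Finset.sum_add_distrib).symm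

lemma hasDerivAt_norm_sq {w : ℝ → E3} {w' : E3} {t : ℝ} (hw : HasDerivAt w w' t) :
    HasDerivAt (fun τ => (‖w τ‖ ^ 2 : ℝ)) (2 * ⟪w t, w'⟫) t := by
  have h := HasDerivAt.inner ℝ hw hw
  simp only [real_inner_self_eq_norm_sq] at h
  have h2 : ⟪w t, w'⟫ + ⟪w', w t⟫ = 2 * ⟪w t, w'⟫ := by rw [real_inner_comm]; ring
  rw [h2] at h; exact h

lemma hasDerivAt_inv_rpow {α : ℝ} (hα : 0 < α) {w : ℝ → E3} {w' : E3} {t : ℝ}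
    (hw : HasDerivAt w w' t) (h0 : w t ≠ 0) :
    HasDerivAt (fun τ => (‖w τ‖ ^ α)⁻¹) (-(α * ⟪w t, w'⟫ / ‖w t‖ ^ (α + 2))) t := by
  have hn := hasDerivAt_norm_sq hw
  have hne : (‖w t‖ ^ 2 : ℝ) ≠ 0 := pow_ne_zero _ (norm_ne_zero_iff.2 h0)
  have h2 := hn.rpow_const (p := -(α/2)) (Or.inl hne)
  have hfun : ∀ u : E3, ((‖u‖ ^ 2 : ℝ)) ^ (-(α/2)) = (‖u‖ ^ α)⁻¹ := by
    intro u
    rw [← Real.rpow_natCast ‖u‖ 2, ← Real.rpow_mul (norm_nonneg u),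
      ← Real.rpow_neg (norm_nonneg u)]
    congr 1; push_cast; ring
  have hval : ((‖w t‖ ^ 2 : ℝ)) ^ (-(α/2) - 1) = (‖w t‖ ^ (α + 2))⁻¹ := by
    rw [← Real.rpow_natCast ‖w t‖ 2, ← Real.rpow_mul (norm_nonneg _),
      ← Real.rpow_neg (norm_nonneg _)]
    congr 1; push_cast; ring
  have h3 : HasDerivAt (fun τ => (‖w τ‖ ^ α)⁻¹)
      (2 * ⟪w t, w'⟫ * (-(α/2)) * (‖w t‖ ^ (α + 2))⁻¹) t := by
    simpa only [hfun, hval] using h2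
  convert h3 using 1
  rw [div_eq_mul_inv]; ring

/-- `∑_{i<j} m_i m_j ⟨q_i - q_j, w_i - w_j⟩ / |q_i - q_j|^{α+2}`. -/
def pairSum (α : ℝ) (m : Fin N → ℝ) (q w : Fin N → E3) : ℝ :=
  ∑ i, ∑ j ∈ Finset.univ.filter (fun j => i < j),
    m i * m j * ⟪q i - q j, w i - w j⟫ / ‖q i - q j‖ ^ (α + 2)

/-- `İ = 2 ∑ m_i ⟨x_i, v_i⟩`. -/
def Idot (m : Fin N → ℝ) (q w : Fin N → E3) : ℝ := ∑ i, m i * (2 * ⟪q i, w i⟫)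

lemma hasDerivAt_inertia (m : Fin N → ℝ) {x : ℝ → Fin N → E3} {v : Fin N → E3} {t : ℝ}
    (hx : ∀ i, HasDerivAt (fun τ => x τ i) (v i) t) :
    HasDerivAt (fun τ => inertia m (x τ)) (Idot m (x t) v) t := by
  have h : ∀ i : Fin N, i ∈ Finset.univ → HasDerivAt (fun τ => m i * ‖x τ i‖ ^ 2)
      (m i * (2 * ⟪x t i, v i⟫)) t :=
    fun i _ => (hasDerivAt_norm_sq (hx i)).const_mul (m i)
  simpa [inertia, Idot] using HasDerivAt.fun_sum h

lemma hasDerivAt_Idot (m : Fin N → ℝ) {x v : ℝ → Fin N → E3} {a : Fin N → E3} {t : ℝ}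
    (hx : ∀ i, HasDerivAt (fun τ => x τ i) (v t i) t)
    (hv : ∀ i, HasDerivAt (fun τ => v τ i) (a i) t) :
    HasDerivAt (fun τ => Idot m (x τ) (v τ))
      (∑ i, m i * (2 * (⟪x t i, a i⟫ + ⟪v t i, v t i⟫))) t := by
  have h : ∀ i : Fin N, i ∈ Finset.univ → HasDerivAt (fun τ => m i * (2 * ⟪x τ i, v τ i⟫))
      (m i * (2 * (⟪x t i, a i⟫ + ⟪v t i, v t i⟫))) t := by
    intro i _
    have h0 := HasDerivAt.inner ℝ (hx i) (hv i)
    have h1 : HasDerivAt (fun τ => (⟪x τ i, v τ i⟫ : ℝ))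
        (⟪x t i, a i⟫ + ⟪v t i, v t i⟫) t := h0
    exact (h1.const_mul (2 : ℝ)).const_mul (m i)
  simpa [Idot] using HasDerivAt.fun_sum h

lemma hasDerivAt_kinetic (m : Fin N → ℝ) {v : ℝ → Fin N → E3} {a : Fin N → E3} {t : ℝ}
    (hv : ∀ i, HasDerivAt (fun τ => v τ i) (a i) t) :
    HasDerivAt (fun τ => kinetic m (v τ)) (∑ i, m i * ⟪v t i, a i⟫) t := by
  have h : ∀ i : Fin N, i ∈ Finset.univ → HasDerivAt (fun τ => m i * ‖v τ i‖ ^ 2)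
      (m i * (2 * ⟪v t i, a i⟫)) t :=
    fun i _ => (hasDerivAt_norm_sq (hv i)).const_mul (m i)
  have h2 := (HasDerivAt.fun_sum h).const_mul (1/2 : ℝ)
  have h3 : HasDerivAt (fun τ => kinetic m (v τ))
      ((1/2 : ℝ) * ∑ i, m i * (2 * ⟪v t i, a i⟫)) t := h2
  convert h3 using 1
  rw [Finset.mul_sum]
  exact Finset.sum_congr rfl fun i _ => by ring

lemma hasDerivAt_pot {α : ℝ} (hα : 0 < α) (m : Fin N → ℝ)
    {x : ℝ → Fin N → E3} {v : Fin N → E3} {t : ℝ}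
    (hx : ∀ i, HasDerivAt (fun τ => x τ i) (v i) t) (hod : OffDiag (x t)) :
    HasDerivAt (fun τ => pot α m (x τ)) (α * pairSum α m (x t) v) t := by
  have hterm : ∀ i j : Fin N, i < j →
      HasDerivAt (fun τ => m i * m j / ‖x τ i - x τ j‖ ^ α)
        (m i * m j * (-(α * ⟪x t i - x t j, v i - v j⟫ / ‖x t i - x t j‖ ^ (α + 2)))) t := by
    intro i j hij
    have hw : HasDerivAt (fun τ => x τ i - x τ j) (v i - v j) t := (hx i).sub (hx j)
    have h0 : x t i - x t j ≠ 0 := sub_ne_zero.2 (hod i j (ne_of_lt hij))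
    have h1 := (hasDerivAt_inv_rpow hα hw h0).const_mul (m i * m j)
    simpa [div_eq_mul_inv] using h1
  have hsum : ∀ i : Fin N, i ∈ Finset.univ →
      HasDerivAt (fun τ => ∑ j ∈ Finset.univ.filter (fun j => i < j),
          m i * m j / ‖x τ i - x τ j‖ ^ α)
        (∑ j ∈ Finset.univ.filter (fun j => i < j),
          m i * m j * (-(α * ⟪x t i - x t j, v i - v j⟫ / ‖x t i - x t j‖ ^ (α + 2)))) t := by
    intro i _
    exact HasDerivAt.fun_sum fun j hj => hterm i j (by simpa using hj)
  have h2 := (HasDerivAt.fun_sum hsum).neg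
  have h3 : HasDerivAt (fun τ => pot α m (x τ))
      (-∑ i : Fin N, ∑ j ∈ Finset.univ.filter (fun j => i < j),
        m i * m j * (-(α * ⟪x t i - x t j, v i - v j⟫ / ‖x t i - x t j‖ ^ (α + 2)))) t := h2
  convert h3 using 1
  rw [pairSum, Finset.mul_sum, ← Finset.sum_neg_distrib]
  refine Finset.sum_congr rfl fun i _ => ?_
  rw [Finset.mul_sum, ← Finset.sum_neg_distrib]
  refine Finset.sum_congr rfl fun j _ => ?_
  ring

lemma sum_inner_accel {α : ℝ} (m : Fin N → ℝ) (q b : Fin N → E3) :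
    ∑ i, m i * ⟪b i, accel α m q i⟫
      = -α * ∑ i, ∑ j ∈ Finset.univ.filter (fun j => i < j),
          m i * m j * ⟪b i - b j, q i - q j⟫ / ‖q i - q j‖ ^ (α + 2) := by
  have hper : ∀ i : Fin N, m i * ⟪b i, accel α m q i⟫
      = -α * ∑ j ∈ Finset.univ.erase i,
          m i * m j * ⟪b i, q i - q j⟫ / ‖q i - q j‖ ^ (α + 2) := by
    intro i
    simp only [accel, real_inner_smul_right, inner_sum, Finset.mul_sum]
    refine Finset.sum_congr rfl fun j _ => ?_
    ring
  calc ∑ i, m i * ⟪b i, accel α m q i⟫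
      = -α * ∑ i, ∑ j ∈ Finset.univ.erase i,
          m i * m j * ⟪b i, q i - q j⟫ / ‖q i - q j‖ ^ (α + 2) := by
        rw [Finset.mul_sum]; exact Finset.sum_congr rfl fun i _ => hper i
    _ = _ := by
        rw [sum_erase_pairs (fun i j => m i * m j * ⟪b i, q i - q j⟫ / ‖q i - q j‖ ^ (α + 2))]
        congr 1
        refine Finset.sum_congr rfl fun i _ => Finset.sum_congr rfl fun j _ => ?_
        rw [norm_sub_rev (q j), show q j - q i = -(q i - q j) by abel, inner_neg_right,
          inner_sub_left]
        ring
lemma sum_inner_accel_self {α : ℝ} (hα : 0 < α) (m : Fin N → ℝ) (q : Fin N → E3)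
    (hod : OffDiag q) :
    ∑ i, m i * ⟪q i, accel α m q i⟫ = α * pot α m q := by
  rw [sum_inner_accel m q q]
  rw [pot, mul_neg, neg_mul, neg_inj]
  congr 1
  refine Finset.sum_congr rfl fun i _ => ?_
  refine Finset.sum_congr rfl fun j hj => ?_
  have hij : i < j := by simpa using hj
  have hw : (0:ℝ) < ‖q i - q j‖ :=
    norm_pos_iff.2 (sub_ne_zero.2 (hod i j (ne_of_lt hij)))
  rw [real_inner_self_eq_norm_sq,
    show (‖q i - q j‖ : ℝ) ^ (2:ℕ) = ‖q i - q j‖ ^ ((2:ℕ):ℝ) from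
      (Real.rpow_natCast _ 2).symm]
  rw [mul_div_assoc, ← Real.rpow_sub hw]
  have h2 : ((2:ℕ):ℝ) - (α + 2) = -α := by push_cast; ring
  rw [h2, Real.rpow_neg hw.le, ← div_eq_mul_inv, mul_div_assoc]

lemma inertia_nonneg (m : Fin N → ℝ) (hm : ∀ i, 0 < m i) (q : Fin N → E3) :
    0 ≤ inertia m q :=
  Finset.sum_nonneg fun i _ => mul_nonneg (hm i).le (sq_nonneg _)

lemma pot_nonpos {α : ℝ} (m : Fin N → ℝ) (hm : ∀ i, 0 < m i) (q : Fin N → E3) :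
    pot α m q ≤ 0 := by
  rw [pot, neg_nonpos]
  refine Finset.sum_nonneg fun i _ => Finset.sum_nonneg fun j _ => ?_
  exact div_nonneg (mul_nonneg (hm i).le (hm j).le) (Real.rpow_nonneg (norm_nonneg _) _)

lemma energy_conserved {α : ℝ} (hα : 0 < α) (m : Fin N → ℝ) {σ : EReal}
    {x v : ℝ → Fin N → E3} (hsol : IsSolnOn α m x v (Dom σ)) (hσ : 0 < σ) :
    ∀ t ∈ Dom σ, energy α m (x t) (v t) = energy α m (x 0) (v 0) := by
  have hd0 : ∀ s ∈ Dom σ, HasDerivAt (fun τ => energy α m (x τ) (v τ)) 0 s := by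
    intro s hs
    obtain ⟨hod, hder⟩ := hsol s hs
    have hkin := hasDerivAt_kinetic m (a := fun i => accel α m (x s) i)
      (fun i => (hder i).2)
    have hpot := hasDerivAt_pot hα m (v := fun i => v s i) (fun i => (hder i).1) hod
    have h := hkin.add hpot
    have hz : (∑ i, m i * ⟪v s i, accel α m (x s) i⟫) + α * pairSum α m (x s) (v s) = 0 := by
      rw [sum_inner_accel m (x s) (v s), pairSum, neg_mul]
      have hAB : (∑ i, ∑ j ∈ Finset.univ.filter (fun j => i < j),
            m i * m j * ⟪v s i - v s j, x s i - x s j⟫ / ‖x s i - x s j‖ ^ (α + 2))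
          = ∑ i, ∑ j ∈ Finset.univ.filter (fun j => i < j),
            m i * m j * ⟪x s i - x s j, v s i - v s j⟫ / ‖x s i - x s j‖ ^ (α + 2) := by
        refine Finset.sum_congr rfl fun i _ => Finset.sum_congr rfl fun j _ => ?_
        rw [real_inner_comm]
      rw [hAB]; ring
    rw [hz] at h
    exact h
  intro t ht
  have hsub : Set.Icc (0:ℝ) t ⊆ Dom σ := by
    intro s hs
    exact ⟨hs.1, lt_of_le_of_lt (EReal.coe_le_coe_iff.2 hs.2) ht.2⟩
  have := constant_of_has_deriv_right_zero (f := fun τ => energy α m (x τ) (v τ))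
    (a := 0) (b := t)
    (fun s hs => ((hd0 s (hsub hs)).continuousAt).continuousWithinAt)
    (fun s hs => ((hd0 s (hsub ⟨hs.1, hs.2.le⟩)).hasDerivWithinAt))
  exact this t ⟨ht.1, le_refl t⟩
lemma inertia_smul (m : Fin N → ℝ) (q : Fin N → E3) (c : ℝ) :
    inertia m (fun i => c • q i) = c ^ 2 * inertia m q := by
  rw [inertia, inertia, Finset.mul_sum]
  refine Finset.sum_congr rfl fun i _ => ?_
  rw [norm_smul, Real.norm_eq_abs, mul_pow, sq_abs]
  ring

lemma pot_smul {α : ℝ} (m : Fin N → ℝ) (q : Fin N → E3) {c : ℝ} (hc : 0 < c) :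
    pot α m (fun i => c • q i) = c ^ (-α) * pot α m q := by
  rw [pot, pot, mul_neg, neg_inj]
  rw [Finset.mul_sum]
  refine Finset.sum_congr rfl fun i _ => ?_
  rw [Finset.mul_sum]
  refine Finset.sum_congr rfl fun j _ => ?_
  rw [← smul_sub, norm_smul, Real.norm_eq_abs, abs_of_pos hc,
    Real.mul_rpow hc.le (norm_nonneg _), Real.rpow_neg hc.le,
    div_eq_mul_inv, div_eq_mul_inv, mul_inv]
  ring

/-- Every element of the constraint set is nonnegative. -/
lemma estar_set_lb {α ω : ℝ} (hα : 2 < α) (m : Fin N → ℝ) (hm : ∀ i, 0 < m i) :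
    ∀ e ∈ {e : ℝ | ∃ q : Fin N → E3,
        OffDiag q ∧ comZero m q ∧ Kfun α m ω q = 0 ∧ e = Eomega α m ω q}, 0 ≤ e := by
  rintro e ⟨q, -, -, hKq, rfl⟩
  rw [Kfun] at hKq
  rw [Eomega]
  have hI : 0 ≤ inertia m q := inertia_nonneg m hm q
  have hω2 : 0 ≤ ω ^ 2 := sq_nonneg ω
  have hωI : 0 ≤ ω ^ 2 * inertia m q := mul_nonneg hω2 hI
  nlinarith [hωI, hI, hω2]

/-- Key bound: if `K_ω(q) < 0` then `E*(ω) < (α/2 - 1) (-U(q))`. -/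
lemma estar_lt {α ω : ℝ} (hα : 2 < α) (hω : 0 < ω) (m : Fin N → ℝ) (hm : ∀ i, 0 < m i)
    (q : Fin N → E3) (hod : OffDiag q) (hcz : comZero m q) (hKq : Kfun α m ω q < 0) :
    Estar α m ω < (α / 2 - 1) * (-pot α m q) := by
  have hα0 : (0:ℝ) < α := by linarith
  have hI0 : 0 ≤ inertia m q := inertia_nonneg m hm q
  have hU : pot α m q < 0 := by
    rw [Kfun] at hKq
    nlinarith [mul_nonneg (sq_nonneg ω) hI0]
  have hI : 0 < inertia m q := by
    rcases lt_or_eq_of_le hI0 with h | h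
    · exact h
    · exfalso
      have hq0 : ∀ i, q i = 0 := by
        intro i
        have hz := (Finset.sum_eq_zero_iff_of_nonneg
          (fun i _ => mul_nonneg (hm i).le (sq_nonneg ‖q i‖))).1 h.symm i (Finset.mem_univ i)
        have : ‖q i‖ ^ 2 = 0 := by
          rcases mul_eq_zero.1 hz with h' | h'
          · exact absurd h' (hm i).ne'
          · exact h'
        simpa [pow_eq_zero_iff, norm_eq_zero] using this
      have : pot α m q = 0 := by
        rw [pot, neg_eq_zero]
        refine Finset.sum_eq_zero fun i _ => Finset.sum_eq_zero fun j _ => ?_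
        rw [hq0 i, hq0 j, sub_zero, norm_zero, Real.zero_rpow hα0.ne', div_zero]
      rw [this] at hU; exact lt_irrefl 0 hU
  -- IVT to find the rescaling
  set I := inertia m q with hIdef
  set U := pot α m q with hUdef
  set F : ℝ → ℝ := fun c => ω ^ 2 * I * c ^ 2 + α * U * c ^ (-α) with hF
  have hF1 : F 1 < 0 := by
    have : F 1 = ω ^ 2 * I + α * U := by simp [hF]
    rw [this]; rw [Kfun] at hKq; linarith
  set M : ℝ := max 2 (Real.sqrt (α * (-U) / (ω ^ 2 * I))) with hM
  have hM2 : (2:ℝ) ≤ M := le_max_left _ _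
  have hM1 : (1:ℝ) < M := by linarith
  have hωI : 0 < ω ^ 2 * I := mul_pos (pow_pos hω 2) hI
  have hFM : 0 ≤ F M := by
    have hMsq : α * (-U) / (ω ^ 2 * I) ≤ M ^ 2 := by
      have h1 : Real.sqrt (α * (-U) / (ω ^ 2 * I)) ≤ M := le_max_right _ _
      have h2 : 0 ≤ α * (-U) / (ω ^ 2 * I) :=
        div_nonneg (mul_nonneg hα0.le (by linarith)) hωI.le
      nlinarith [Real.sq_sqrt h2, Real.sqrt_nonneg (α * (-U) / (ω ^ 2 * I))]
    have h3 : α * (-U) ≤ ω ^ 2 * I * M ^ 2 := by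
      rw [div_le_iff₀ hωI] at hMsq; linarith [hMsq]
    have h4 : M ^ (-α) ≤ 1 :=
      Real.rpow_le_one_of_one_le_of_nonpos hM1.le (by linarith)
    have h5 : 0 < M ^ (-α) := Real.rpow_pos_of_pos (by linarith) _
    have hαU : α * U < 0 := mul_neg_of_pos_of_neg hα0 hU
    have h6 : α * U ≤ α * U * M ^ (-α) := by
      nlinarith [mul_nonneg (neg_nonneg.2 hαU.le) (sub_nonneg.2 h4)]
    simp only [hF]
    linarith
  have hcont : ContinuousOn F (Set.Icc 1 M) := by
    intro c hc
    have hc0 : c ≠ 0 := by have := hc.1; intro h; rw [h] at this; linarith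
    have h1 : ContinuousAt (fun c : ℝ => c ^ (-α)) c :=
      Real.continuousAt_rpow_const c (-α) (Or.inl hc0)
    have h2 : ContinuousAt F c := by
      apply ContinuousAt.add
      · exact (continuousAt_pow c 2).const_mul _
      · exact h1.const_mul _
    exact h2.continuousWithinAt
  obtain ⟨c, hcmem, hFc⟩ : ∃ c ∈ Set.Icc (1:ℝ) M, F c = 0 := by
    have := intermediate_value_Icc hM1.le hcont
    have h0 : (0:ℝ) ∈ Set.Icc (F 1) (F M) := ⟨hF1.le, hFM⟩
    obtain ⟨c, hc, hFc⟩ := this h0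
    exact ⟨c, hc, hFc⟩
  have hc1 : 1 < c := by
    rcases lt_or_eq_of_le hcmem.1 with h | h
    · exact h
    · exfalso; rw [← h] at hFc; rw [hFc] at hF1; exact lt_irrefl 0 hF1
  have hc0 : 0 < c := by linarith
  -- the rescaled configuration
  set q' : Fin N → E3 := fun i => c • q i with hq'
  have hodq' : OffDiag q' := by
    intro i j hij h
    exact hod i j hij (smul_right_injective E3 hc0.ne' h)
  have hczq' : comZero m q' := by
    rw [comZero]
    have : ∑ i, m i • q' i = c • ∑ i, m i • q i := by
      rw [Finset.smul_sum]
      exact Finset.sum_congr rfl fun i _ => smul_comm (m i) c (q i)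
    rw [this, hcz, smul_zero]
  have hKq' : Kfun α m ω q' = 0 := by
    rw [Kfun, hq', inertia_smul, pot_smul m q hc0]
    have : ω ^ 2 * (c ^ 2 * I) + α * (c ^ (-α) * U) = F c := by rw [hF]; ring
    rw [← hIdef, ← hUdef, this, hFc]
  have hmem : Eomega α m ω q' ∈ {e : ℝ | ∃ q : Fin N → E3,
      OffDiag q ∧ comZero m q ∧ Kfun α m ω q = 0 ∧ e = Eomega α m ω q} :=
    ⟨q', hodq', hczq', hKq', rfl⟩
  have hbdd : BddBelow {e : ℝ | ∃ q : Fin N → E3,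
      OffDiag q ∧ comZero m q ∧ Kfun α m ω q = 0 ∧ e = Eomega α m ω q} :=
    ⟨0, fun e he => estar_set_lb hα m hm e he⟩
  have hle : Estar α m ω ≤ Eomega α m ω q' := csInf_le hbdd hmem
  have hEq' : Eomega α m ω q' = ω ^ 2 / 2 * (c ^ 2 * I) + c ^ (-α) * U := by
    rw [Eomega, hq', inertia_smul, pot_smul m q hc0, ← hIdef, ← hUdef]
  have hP1 : c ^ (-α) < 1 := Real.rpow_lt_one_of_one_lt_of_neg hc1 (by linarith)
  have hP0 : 0 < c ^ (-α) := Real.rpow_pos_of_pos hc0 _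
  have hkey : Eomega α m ω q' < (α / 2 - 1) * (-U) := by
    rw [hEq']
    have hFc' : ω ^ 2 * I * c ^ 2 + α * U * c ^ (-α) = 0 := by rw [← hFc, hF]
    nlinarith [mul_pos (mul_pos (show (0:ℝ) < α / 2 - 1 by linarith)
      (show (0:ℝ) < -U by linarith)) (show (0:ℝ) < 1 - c ^ (-α) by linarith)]
  exact lt_of_le_of_lt hle hkey
/-- **Singularity in `K⁻(ω)`**: for `α > 2` and `ω > 0`, a solution with center of mass zero
and energy `E = E*(ω) − δ < E*(ω)` that eventually satisfies `K_ω(x(t)) < 0` has a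
singularity in finite time, and indeed `Ï(x(t)) < −4δ` for all later times. -/
theorem singularity_in_Kminus {N : ℕ} (α ω : ℝ) (hα : 2 < α) (hω : 0 < ω)
    (m : Fin N → ℝ) (hm : ∀ i, 0 < m i)
    (σ : EReal) (x v : ℝ → Fin N → E3) (hx : IsMaxSoln α m σ x v)
    (hcom : ∀ t ∈ Dom σ, comZero m (x t))
    (hE : energy α m (x 0) (v 0) < Estar α m ω)
    (tstar : ℝ) (htstar : 0 ≤ tstar)
    (hK : ∀ t ∈ Dom σ, tstar < t → Kfun α m ω (x t) < 0) :
    σ < ⊤ ∧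
      ∀ t ∈ Dom σ, tstar < t →
        deriv (deriv (fun s => inertia m (x s))) t
          < -4 * (Estar α m ω - energy α m (x 0) (v 0)) := by
  obtain ⟨hσ0, hsol, -⟩ := hx
  have hα0 : (0:ℝ) < α := by linarith
  have hδ : 0 < Estar α m ω - energy α m (x 0) (v 0) := by linarith
  have hcons := energy_conserved hα0 m hsol hσ0
  -- first derivative of I along the flow
  have hIdot : ∀ t ∈ Dom σ, HasDerivAt (fun s => inertia m (x s)) (Idot m (x t) (v t)) t := by
    intro t ht
    exact hasDerivAt_inertia m fun i => ((hsol t ht).2 i).1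
  -- second derivative of I along the flow
  have hIddot : ∀ t ∈ Dom σ, HasDerivAt (fun s => Idot m (x s) (v s))
      (4 * kinetic m (v t) + 2 * α * pot α m (x t)) t := by
    intro t ht
    obtain ⟨hod, hder⟩ := hsol t ht
    have h := hasDerivAt_Idot m (a := fun i => accel α m (x t) i)
      (fun i => (hder i).1) (fun i => (hder i).2)
    have hval : ∑ i, m i * (2 * (⟪x t i, accel α m (x t) i⟫ + ⟪v t i, v t i⟫))
        = 4 * kinetic m (v t) + 2 * α * pot α m (x t) := by
      have h1 : ∑ i, m i * (2 * (⟪x t i, accel α m (x t) i⟫ + ⟪v t i, v t i⟫))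
          = 2 * (∑ i, m i * ⟪x t i, accel α m (x t) i⟫)
            + 2 * ∑ i, m i * ⟪v t i, v t i⟫ := by
        rw [Finset.mul_sum, Finset.mul_sum, ← Finset.sum_add_distrib]
        exact Finset.sum_congr rfl fun i _ => by ring
      have h2 : ∑ i, m i * ⟪v t i, v t i⟫ = 2 * kinetic m (v t) := by
        rw [kinetic]
        have : ∀ i : Fin N, m i * ⟪v t i, v t i⟫ = m i * ‖v t i‖ ^ 2 := fun i => by
          rw [real_inner_self_eq_norm_sq]
        rw [Finset.sum_congr rfl fun i _ => this i]
        ring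
      rw [h1, h2, sum_inner_accel_self hα0 m (x t) hod]
      ring
    rw [hval] at h
    exact h
  -- the Lagrange–Jacobi bound
  have hLJ : ∀ t ∈ Dom σ, tstar < t →
      4 * kinetic m (v t) + 2 * α * pot α m (x t)
        < -4 * (Estar α m ω - energy α m (x 0) (v 0)) := by
    intro t ht htt
    have hU := estar_lt hα hω m hm (x t) (hsol t ht).1 (hcom t ht) (hK t ht htt)
    have he : kinetic m (v t) + pot α m (x t) = energy α m (x 0) (v 0) := by
      rw [← hcons t ht, energy]
    nlinarith [hU, he]
  -- pointwise second-derivative statement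
  have hpt : ∀ t ∈ Dom σ, tstar < t →
      deriv (deriv (fun s => inertia m (x s))) t
        < -4 * (Estar α m ω - energy α m (x 0) (v 0)) := by
    intro t ht htt
    have ht0 : 0 < t := lt_of_le_of_lt htstar htt
    have hopen : IsOpen (Set.Ioi (0:ℝ) ∩ Real.toEReal ⁻¹' Set.Iio σ) :=
      isOpen_Ioi.inter (isOpen_Iio.preimage continuous_coe_real_ereal)
    have hts : t ∈ Set.Ioi (0:ℝ) ∩ Real.toEReal ⁻¹' Set.Iio σ := ⟨ht0, ht.2⟩
    have hev : deriv (fun s => inertia m (x s)) =ᶠ[nhds t]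
        (fun s => Idot m (x s) (v s)) := by
      filter_upwards [hopen.mem_nhds hts] with s hs
      exact (hIdot s ⟨le_of_lt hs.1, hs.2⟩).deriv
    rw [hev.deriv_eq, (hIddot t ht).deriv]
    exact hLJ t ht htt
  refine ⟨?_, hpt⟩
  -- finiteness of σ by contradiction
  by_contra hcon
  have hσtop : σ = ⊤ := top_le_iff.1 (not_lt.1 hcon)
  have hDom : ∀ t : ℝ, 0 ≤ t → t ∈ Dom σ := fun t ht =>
    ⟨ht, by rw [hσtop]; exact EReal.coe_lt_top t⟩
  set δ := Estar α m ω - energy α m (x 0) (v 0) with hδdef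
  set g : ℝ → ℝ := fun s => Idot m (x s) (v s) with hg
  set f : ℝ → ℝ := fun s => inertia m (x s) with hf
  have hfpos : ∀ s : ℝ, 0 ≤ f s := fun s => inertia_nonneg m hm (x s)
  -- mean value estimate for g
  have mvtg : ∀ a b : ℝ, tstar ≤ a → a < b → g b - g a < -4 * δ * (b - a) := by
    intro a b ha hab
    have ha0 : 0 ≤ a := le_trans htstar ha
    obtain ⟨c, hc, hceq⟩ := exists_hasDerivAt_eq_slope g
      (fun s => 4 * kinetic m (v s) + 2 * α * pot α m (x s)) hab
      (fun s hs => ((hIddot s (hDom s (le_trans ha0 hs.1))).continuousAt).continuousWithinAt)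
      (fun s hs => hIddot s (hDom s (by linarith [hs.1])))
    have hcd : c ∈ Dom σ := hDom c (by linarith [hc.1])
    have hLJc := hLJ c hcd (by linarith [hc.1])
    rw [hceq] at hLJc
    rw [div_lt_iff₀ (by linarith : (0:ℝ) < b - a)] at hLJc
    linarith
  -- mean value equality for f
  have mvtf : ∀ a b : ℝ, 0 ≤ a → a < b → ∃ c ∈ Set.Ioo a b, f b - f a = g c * (b - a) := by
    intro a b ha hab
    obtain ⟨c, hc, hceq⟩ := exists_hasDerivAt_eq_slope f g hab
      (fun s hs => ((hIdot s (hDom s (le_trans ha hs.1))).continuousAt).continuousWithinAt)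
      (fun s hs => hIdot s (hDom s (by linarith [hs.1])))
    refine ⟨c, hc, ?_⟩
    rw [hceq, div_mul_cancel₀ _ (sub_ne_zero.2 (ne_of_gt hab))]
  set a : ℝ := tstar + 1 with hadef
  set b : ℝ := a + (|g a| + 1) / (4 * δ) with hbdef
  have hfrac : 0 < (|g a| + 1) / (4 * δ) :=
    div_pos (by positivity) (by linarith)
  have hab : a < b := by rw [hbdef]; linarith
  have h1 : g b - g a < -4 * δ * (b - a) := mvtg a b (by linarith) hab
  have hba : b - a = (|g a| + 1) / (4 * δ) := by rw [hbdef]; ring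
  have h2 : g b < -1 := by
    have : -4 * δ * (b - a) = -(|g a| + 1) := by
      rw [hba]; field_simp
    have hga := le_abs_self (g a)
    rw [this] at h1
    linarith
  have hgneg : ∀ s : ℝ, b < s → g s < -1 := by
    intro s hs
    have h3 : g s - g b < -4 * δ * (s - b) := mvtg b s (by linarith) hs
    nlinarith [mul_pos hδ (sub_pos.2 hs)]
  set T : ℝ := b + (f b + 1) with hTdef
  have hbT : b < T := by have := hfpos b; rw [hTdef]; linarith
  have hb0 : 0 ≤ b := by linarith
  obtain ⟨c, hcmem, hceq⟩ := mvtf b T hb0 hbT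
  have hgc : g c < -1 := hgneg c hcmem.1
  have hTb : T - b = f b + 1 := by rw [hTdef]; ring
  have hfb1 : 0 < f b + 1 := by have := hfpos b; linarith
  have hmul : g c * (T - b) < -1 * (T - b) := by
    rw [hTb]
    exact mul_lt_mul_of_pos_right hgc hfb1
  rw [hTb] at hceq hmul
  have hfT : f T < -1 := by linarith [hceq, hmul]
  linarith [hfpos T]

end
end NBodyPaper
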